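/- arXiv:1607.04715 — 2 statements merged into one kernel-verified Lean document; each statement's English description precedes it below -/
import Mathlib

section
/- Let V = ℂ[∂]x ⊕ ℂ[∂]y with even part ℂ[∂]x and odd part ℂ[∂]y. For a,b ∈ ℂ, c ∈ ℂ*, the actions L_i _λ x = cⁱ(∂+aλ+b)x, L_i _λ y = cⁱ(∂+(a−1/2)λ+b)y, G_i _λ x = cⁱ(∂+(2a−1)λ+b)y, G_i _λ y = cⁱ x define a conformal module structure over the loop super-Virasoro conformal superalgebra 𝔠𝔩𝔰. -/
/-!
Each component of the `λ`-actions `LM'` and `GM'` is a map `f(∂) ↦ cⁱ f(∂+λ) q(∂)` with `q` equal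
to `1` or linear. Composing two such maps gives `f(∂) ↦ cⁱcʲ f(∂+λ+μ) q'(∂+λ) q(∂)`, and
`cⁱcʲ = cⁱ⁺ʲ` because `c ≠ 0`, so each bracket relation reduces, componentwise, to an identity
between products of these linear polynomials.
-/

open Polynomial

/-- `ℂ[∂]`. -/
abbrev P := Polynomial ℂ
/-- The free `ℂ[∂]`-module `V = ℂ[∂]x ⊕ ℂ[∂]y`: the first component is the coefficient of
the even generator `x`, the second that of the odd generator `y`. -/
abbrev V := P × P

/-- Substitution `∂ ↦ ∂ + λ`. -/
noncomputable def sh (l : ℂ) (f : P) : P := f.comp (Polynomial.X + Polynomial.C l)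

/-- The action of `∂` on `V`. -/
noncomputable def dV (v : V) : V := (Polynomial.X * v.1, Polynomial.X * v.2)

/-- The `λ`-action of `L_i` on `M_{a,b,c}`:
`L_i ₗ x = cⁱ(∂+aλ+b)x`, `L_i ₗ y = cⁱ(∂+(a+1/2)λ+b)y`, extended by
`L_i ₗ (f(∂)v) = f(∂+λ) L_i ₗ v`. -/
noncomputable def LM (a b c : ℂ) (i : ℤ) (l : ℂ) (v : V) : V :=
  (Polynomial.C (c ^ i) * sh l v.1 * (Polynomial.X + Polynomial.C (a*l + b)),
   Polynomial.C (c ^ i) * sh l v.2 * (Polynomial.X + Polynomial.C ((a + 1/2)*l + b)))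

/-- The `λ`-action of `G_i` on `M_{a,b,c}`:
`G_i ₗ x = cⁱ y`, `G_i ₗ y = cⁱ(∂+2aλ+b)x`. -/
noncomputable def GM (a b c : ℂ) (i : ℤ) (l : ℂ) (v : V) : V :=
  (Polynomial.C (c ^ i) * sh l v.2 * (Polynomial.X + Polynomial.C (2*a*l + b)),
   Polynomial.C (c ^ i) * sh l v.1)

/-- The `λ`-action of `L_i` on `M'_{a,b,c}`:
`L_i ₗ x = cⁱ(∂+aλ+b)x`, `L_i ₗ y = cⁱ(∂+(a−1/2)λ+b)y`. -/
noncomputable def LM' (a b c : ℂ) (i : ℤ) (l : ℂ) (v : V) : V :=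
  (Polynomial.C (c ^ i) * sh l v.1 * (Polynomial.X + Polynomial.C (a*l + b)),
   Polynomial.C (c ^ i) * sh l v.2 * (Polynomial.X + Polynomial.C ((a - 1/2)*l + b)))

/-- The `λ`-action of `G_i` on `M'_{a,b,c}`:
`G_i ₗ x = cⁱ(∂+(2a−1)λ+b)y`, `G_i ₗ y = cⁱ x`. -/
noncomputable def GM' (a b c : ℂ) (i : ℤ) (l : ℂ) (v : V) : V :=
  (Polynomial.C (c ^ i) * sh l v.2,
   Polynomial.C (c ^ i) * sh l v.1 * (Polynomial.X + Polynomial.C ((2*a - 1)*l + b)))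

noncomputable def shiftAct (k l : ℂ) (q f : P) : P := C k * sh l f * q

theorem sh_mul (l : ℂ) (f g : P) : sh l (f * g) = sh l f * sh l g := mul_comp f g _

theorem sh_C (l k : ℂ) : sh l (C k) = C k := C_comp

theorem eval_sh (l z : ℂ) (f : P) : (sh l f).eval z = f.eval (z + l) := by
  simp only [sh, eval_comp, eval_add, eval_X, eval_C]

theorem sh_sh (l m : ℂ) (f : P) : sh l (sh m f) = sh (l + m) f := by
  rw [sh, sh, sh, comp_assoc, add_comp, X_comp, C_comp, C_add, add_assoc]

theorem shiftAct_shiftAct (k k' l m : ℂ) (q q' f : P) :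
    shiftAct k l q (shiftAct k' m q' f) = shiftAct (k * k') (l + m) (sh l q' * q) f := by
  simp only [shiftAct, sh_mul, sh_C, sh_sh, C_mul]
  ring

theorem shiftAct_shiftAct_sub (k k' l m : ℂ) (q₁ q₂ q₃ q₄ f : P) :
    shiftAct k l q₁ (shiftAct k' m q₂ f) - shiftAct k' m q₃ (shiftAct k l q₄ f)
      = shiftAct (k * k') (l + m) (sh l q₂ * q₁ - sh m q₄ * q₃) f := by
  rw [shiftAct_shiftAct, shiftAct_shiftAct, mul_comm k', add_comm m]
  simp only [shiftAct]
  ring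

theorem shiftAct_shiftAct_add (k k' l m : ℂ) (q₁ q₂ q₃ q₄ f : P) :
    shiftAct k l q₁ (shiftAct k' m q₂ f) + shiftAct k' m q₃ (shiftAct k l q₄ f)
      = shiftAct (k * k') (l + m) (sh l q₂ * q₁ + sh m q₄ * q₃) f := by
  rw [shiftAct_shiftAct, shiftAct_shiftAct, mul_comm k', add_comm m]
  simp only [shiftAct]
  ring

theorem smul_shiftAct (s k l : ℂ) (q f : P) :
    s • shiftAct k l q f = shiftAct k l (C s * q) f := by
  simp only [shiftAct, smul_eq_C_mul]
  ring

section Components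

variable (a b c : ℂ) (i : ℤ) (l : ℂ) (v : V)

theorem LM'_fst : (LM' a b c i l v).1 = shiftAct (c ^ i) l (X + C (a * l + b)) v.1 := rfl

theorem LM'_snd : (LM' a b c i l v).2 = shiftAct (c ^ i) l (X + C ((a - 1/2) * l + b)) v.2 := rfl

theorem GM'_fst : (GM' a b c i l v).1 = shiftAct (c ^ i) l 1 v.2 := (mul_one _).symm

theorem GM'_snd : (GM' a b c i l v).2 = shiftAct (c ^ i) l (X + C ((2 * a - 1) * l + b)) v.1 := rfl

end Components

section Brackets

variable (a b : ℂ) {c : ℂ} (hc : c ≠ 0) (i j : ℤ) (l m : ℂ) (v : V)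
include hc

theorem LM'_bracket_LM' :
    (l - m) • LM' a b c (i+j) (l+m) v
      = LM' a b c i l (LM' a b c j m v) - LM' a b c j m (LM' a b c i l v) := by
  refine Prod.ext ?_ ?_ <;>
  · simp only [Prod.smul_fst, Prod.smul_snd, Prod.fst_sub, Prod.snd_sub, LM'_fst, LM'_snd]
    rw [shiftAct_shiftAct_sub, smul_shiftAct, zpow_add₀ hc]
    congr 1
    refine Polynomial.funext fun z => ?_
    simp only [eval_sub, eval_add, eval_mul, eval_X, eval_C, eval_sh]
    ring

theorem LM'_bracket_GM' :
    ((1/2)*l - m) • GM' a b c (i+j) (l+m) v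
      = LM' a b c i l (GM' a b c j m v) - GM' a b c j m (LM' a b c i l v) := by
  refine Prod.ext ?_ ?_ <;>
  · simp only [Prod.smul_fst, Prod.smul_snd, Prod.fst_sub, Prod.snd_sub, LM'_fst, LM'_snd,
      GM'_fst, GM'_snd]
    rw [shiftAct_shiftAct_sub, smul_shiftAct, zpow_add₀ hc]
    congr 1
    refine Polynomial.funext fun z => ?_
    simp only [eval_sub, eval_add, eval_mul, eval_X, eval_C, eval_one, eval_sh]
    ring

theorem GM'_bracket_GM' :
    (2 : ℂ) • LM' a b c (i+j) (l+m) v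
      = GM' a b c i l (GM' a b c j m v) + GM' a b c j m (GM' a b c i l v) := by
  refine Prod.ext ?_ ?_ <;>
  · simp only [Prod.smul_fst, Prod.smul_snd, Prod.fst_add, Prod.snd_add, LM'_fst, LM'_snd,
      GM'_fst, GM'_snd]
    rw [shiftAct_shiftAct_add, smul_shiftAct, zpow_add₀ hc]
    congr 1
    refine Polynomial.funext fun z => ?_
    simp only [eval_add, eval_mul, eval_X, eval_C, eval_one, eval_sh]
    ring

end Brackets

/-- the actions `L_i ₗ x = cⁱ(∂+aλ+b)x`, `L_i ₗ y = cⁱ(∂+(a−1/2)λ+b)y`,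
`G_i ₗ x = cⁱ(∂+(2a−1)λ+b)y`, `G_i ₗ y = cⁱx` make `M'_{a,b,c}` a conformal module over
the loop super-Virasoro conformal superalgebra `𝔠𝔩𝔰`. -/
theorem stmt9 (a b c : ℂ) (hc : c ≠ 0) (i j : ℤ) (l m : ℂ) (v : V) :
    (l - m) • LM' a b c (i+j) (l+m) v
        = LM' a b c i l (LM' a b c j m v) - LM' a b c j m (LM' a b c i l v)
    ∧ ((1/2)*l - m) • GM' a b c (i+j) (l+m) v
        = LM' a b c i l (GM' a b c j m v) - GM' a b c j m (LM' a b c i l v)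
    ∧ (2 : ℂ) • LM' a b c (i+j) (l+m) v
        = GM' a b c i l (GM' a b c j m v) + GM' a b c j m (GM' a b c i l v) :=
  ⟨LM'_bracket_LM' a b hc i j l m v, LM'_bracket_GM' a b hc i j l m v,
    GM'_bracket_GM' a b hc i j l m v⟩
end

section
/- The 𝔠𝔩𝔰-module M'_{a,b,c} (with L_i _λ x = cⁱ(∂+aλ+b)x, L_i _λ y = cⁱ(∂+(a−1/2)λ+b)y, G_i _λ x = cⁱ(∂+(2a−1)λ+b)y, G_i _λ y = cⁱx) is irreducible if and only if a ≠ 1/2; and when a = 1/2, ℂ[∂]x ⊕ ℂ[∂](∂+b)y is its unique nontrivial proper submodule. -/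
open Polynomial

/-- `S` is a `𝔠𝔩𝔰`-submodule of `M'_{a,b,c}`: a `ℂ`-subspace closed under `∂` and under all
`λ`-actions of the `L_i` and `G_i`. -/
def IsSubM' (a b c : ℂ) (S : Submodule ℂ V) : Prop :=
  (∀ v ∈ S, dV v ∈ S) ∧
  ∀ (i : ℤ) (l : ℂ), ∀ v ∈ S, LM' a b c i l v ∈ S ∧ GM' a b c i l v ∈ S

/-- The candidate submodule `ℂ[∂]x ⊕ ℂ[∂](∂+b)y` of `M'_{1/2,b,c}`. -/
noncomputable def NM' (b : ℂ) : Submodule ℂ V :=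
  Submodule.comap (LinearMap.snd ℂ P P)
    ((Ideal.span {Polynomial.X + Polynomial.C b}).restrictScalars ℂ)

/-!
Only `L_0` and `G_0` are needed. Write `L_λ v`, `G_λ v` for their `λ`-actions and
`τ_λ f = f(∂ + λ)`. Then `G_λ (G_0 v) - L_λ v = λ ((1 - a) τ_λ v₁, (a - 1/2) τ_λ v₂)`.
If `a ≠ 1/2`, a nonzero submodule contains some nonzero `q y`, and by this identity the subspace
`{q | q y ∈ S}` of `ℂ[∂]` is invariant under `τ_1`. Iterating the forward difference `τ_1 - 1`
`deg q` times turns `q` into a nonzero constant, so `y ∈ S`, then `x = G_0 y ∈ S` and `S` is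
everything. If `a = 1/2` the identity makes `{f | f x ∈ S}` invariant instead, so every nonzero
submodule contains `x`, hence `ℂ[∂]x ⊕ ℂ[∂](∂ + b)y`, which is the kernel of the functional
`w ↦ w₂(-b)` and therefore a maximal proper subspace.
-/

theorem sh_eq_taylor (l : ℂ) (f : P) : sh l f = taylor l f := rfl

namespace Polynomial

theorem eval_iterate_taylor_one_sub {R : Type*} [CommRing R] (p : R[X]) (n : ℕ) :
    (fun x => ((fun q => taylor 1 q - q)^[n] p).eval x) = (fwdDiff 1)^[n] p.eval := by
  induction n with
  | zero => rfl
  | succ n ih =>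
    rw [Function.iterate_succ_apply', Function.iterate_succ_apply', ← ih]
    funext x
    simp [fwdDiff, taylor_eval]

theorem iterate_taylor_one_sub_natDegree {R : Type*} [CommRing R] [IsDomain R] [Infinite R]
    (p : R[X]) :
    (fun q => taylor 1 q - q)^[p.natDegree] p = C (p.leadingCoeff * p.natDegree.factorial) := by
  refine Polynomial.funext fun x => ?_
  have h := congrFun (eval_iterate_taylor_one_sub p p.natDegree) x
  rw [fwdDiff_iter_degree_eq_factorial] at h
  simpa using h

theorem one_mem_of_taylor_one_mem {K : Type*} [Field K] [CharZero K] (T : Submodule K K[X])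
    (hT : ∀ p ∈ T, taylor 1 p ∈ T) {p : K[X]} (hp : p ∈ T) (hp0 : p ≠ 0) : (1 : K[X]) ∈ T := by
  have hiter : ∀ n, (fun q => taylor 1 q - q)^[n] p ∈ T := by
    intro n
    induction n with
    | zero => exact hp
    | succ n ih =>
      rw [Function.iterate_succ_apply']
      exact T.sub_mem (hT _ ih) ih
  have hk : p.leadingCoeff * p.natDegree.factorial ≠ 0 :=
    mul_ne_zero (leadingCoeff_ne_zero.2 hp0) (Nat.cast_ne_zero.2 p.natDegree.factorial_ne_zero)
  have h := T.smul_mem (p.leadingCoeff * p.natDegree.factorial)⁻¹ (hiter p.natDegree)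
  rwa [iterate_taylor_one_sub_natDegree, smul_C, smul_eq_mul, inv_mul_cancel₀ hk,
    map_one] at h

theorem mul_X_add_C_sub_mul_X_add_C {R : Type*} [CommRing R] (p : R[X]) (α β : R) :
    p * (X + C α) - p * (X + C β) = (α - β) • p := by
  rw [← mul_sub, add_sub_add_left_eq_sub, ← C_sub, mul_comm, smul_eq_C_mul]

end Polynomial

theorem smul_mem_of_forall_dV_mem {S : Submodule ℂ V} (hd : ∀ v ∈ S, dV v ∈ S) (p : P) {v : V}
    (hv : v ∈ S) : p • v ∈ S := by
  induction p using Polynomial.induction_on with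
  | C k => simpa [← algebraMap_smul P k v] using S.smul_mem k hv
  | add p q hp hq => simpa [add_smul] using S.add_mem hp hq
  | monomial n k ih =>
    have h := hd _ ih
    rw [pow_succ, ← mul_assoc, mul_comm _ X, mul_smul]
    exact h

theorem eq_top_of_one_zero_mem_of_zero_one_mem {S : Submodule ℂ V} (hd : ∀ v ∈ S, dV v ∈ S)
    (h₁ : ((1, 0) : V) ∈ S) (h₂ : ((0, 1) : V) ∈ S) : S = ⊤ := by
  refine Submodule.eq_top_iff'.2 fun v => ?_
  simpa using S.add_mem (smul_mem_of_forall_dV_mem hd v.1 h₁) (smul_mem_of_forall_dV_mem hd v.2 h₂)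

theorem mem_NM' (b : ℂ) (w : V) : w ∈ NM' b ↔ X + C b ∣ w.2 := by
  simp [NM', Ideal.mem_span_singleton]

theorem NM'_eq_ker (b : ℂ) : NM' b = LinearMap.ker (leval (-b) ∘ₗ LinearMap.snd ℂ P P) := by
  ext w
  simpa [mem_NM'] using dvd_iff_isRoot (a := -b) (p := w.2)

theorem isCoatom_NM' (b : ℂ) : IsCoatom (NM' b) := by
  rw [NM'_eq_ker]
  exact LinearMap.isCoatom_ker_of_surjective fun k => ⟨(0, C k), by simp⟩

theorem NM'_ne_bot (b : ℂ) : NM' b ≠ ⊥ := fun h => by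
  have h10 : ((1, 0) : V) ∈ NM' b := (mem_NM' b _).2 (dvd_zero _)
  simp [h] at h10

theorem isSubM'_NM' (b c : ℂ) : IsSubM' (1/2) b c (NM' b) := by
  refine ⟨fun v hv => ?_, fun i l v hv => ⟨?_, ?_⟩⟩ <;> rw [mem_NM'] at hv ⊢
  · exact hv.mul_left X
  · norm_num [LM']
  · norm_num [GM']

namespace IsSubM'

variable {a b c : ℂ} {S : Submodule ℂ V} {v : V}

theorem smul_mem (hS : IsSubM' a b c S) (p : P) (hv : v ∈ S) : p • v ∈ S :=
  smul_mem_of_forall_dV_mem hS.1 p hv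

theorem L_mem (hS : IsSubM' a b c S) (hv : v ∈ S) (l : ℂ) :
    ((taylor l v.1 * (X + C (a * l + b)), taylor l v.2 * (X + C ((a - 1/2) * l + b))) : V) ∈ S := by
  simpa [LM', sh_eq_taylor] using (hS.2 0 l v hv).1

theorem G_mem (hS : IsSubM' a b c S) (hv : v ∈ S) (l : ℂ) :
    ((taylor l v.2, taylor l v.1 * (X + C ((2 * a - 1) * l + b))) : V) ∈ S := by
  simpa [GM', sh_eq_taylor] using (hS.2 0 l v hv).2

theorem G_zero_mem (hS : IsSubM' a b c S) (hv : v ∈ S) : ((v.2, v.1 * (X + C b)) : V) ∈ S := by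
  simpa using hS.G_mem hv 0

theorem smul_taylor_mem (hS : IsSubM' a b c S) (hv : v ∈ S) (l : ℂ) :
    ((((1 - a) * l) • taylor l v.1, ((a - 1/2) * l) • taylor l v.2) : V) ∈ S := by
  have hX : taylor l (X + C b) = X + C (l + b) := by simp only [map_add, taylor_X, taylor_C]; ring
  convert S.sub_mem (hS.G_mem (hS.G_zero_mem hv) l) (hS.L_mem hv l) using 1
  simp only [taylor_mul, hX, Prod.mk_sub_mk, mul_X_add_C_sub_mul_X_add_C]
  congr 3 <;> ring

theorem taylor_one_inr_mem_of_ne_half (ha : a ≠ 1/2) (hS : IsSubM' a b c S) {q : P}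
    (hq : ((0, q) : V) ∈ S) : ((0, taylor 1 q) : V) ∈ S := by
  have h := S.smul_mem (a - 1/2)⁻¹ (hS.smul_taylor_mem hq 1)
  simp only [Prod.smul_mk, smul_smul, mul_one, map_zero, smul_zero,
    inv_mul_cancel₀ (sub_ne_zero.2 ha), one_smul] at h
  exact h

theorem exists_inr_mem_of_ne_half (ha : a ≠ 1/2) (hS : IsSubM' a b c S) (hv : v ∈ S)
    (hv0 : v ≠ 0) : ∃ q ≠ 0, ((0, q) : V) ∈ S := by
  by_cases hv2 : v.2 = 0
  · have hv1 : v.1 ≠ 0 := fun h => hv0 (Prod.ext h hv2)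
    refine ⟨v.1 * (X + C b), mul_ne_zero hv1 (X_add_C_ne_zero b), ?_⟩
    simpa [hv2] using hS.G_zero_mem hv
  -- `(∂ + a + b) • smul_taylor_mem - (1 - a) • L_mem` at `λ = 1` cancels the `x`-coordinate
  set r : P := C (a - 1/2) * (X + C (a + b)) - C (1 - a) * (X + C (a - 1/2 + b))
  have hr : r ≠ 0 := fun h => by
    have h' := congrArg (eval (-(a - 1/2 + b))) h
    simp only [r, eval_sub, eval_mul, eval_add, eval_X, eval_C, eval_zero] at h'
    exact ha (by linear_combination 2 * h')
  refine ⟨taylor 1 v.2 * r, mul_ne_zero ((taylor_eq_zero 1 v.2).not.2 hv2) hr, ?_⟩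
  convert S.sub_mem (hS.smul_mem (X + C (a + b)) (hS.smul_taylor_mem hv 1))
    (hS.smul_mem (C (1 - a)) (hS.L_mem hv 1)) using 1
  simp only [r, Prod.smul_mk, smul_eq_mul, Prod.mk_sub_mk, mul_one, smul_eq_C_mul]
  congr 1 <;> ring

theorem eq_top_of_ne_half (ha : a ≠ 1/2) (hS : IsSubM' a b c S) (hbot : S ≠ ⊥) : S = ⊤ := by
  obtain ⟨v, hv, hv0⟩ := Submodule.exists_mem_ne_zero_of_ne_bot hbot
  obtain ⟨q, hq0, hq⟩ := exists_inr_mem_of_ne_half ha hS hv hv0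
  have h01 : ((0, 1) : V) ∈ S :=
    one_mem_of_taylor_one_mem (S.comap (LinearMap.inr ℂ P P))
      (fun p hp => taylor_one_inr_mem_of_ne_half ha hS hp) hq hq0
  have h10 : ((1, 0) : V) ∈ S := by simpa using hS.G_zero_mem h01
  exact eq_top_of_one_zero_mem_of_zero_one_mem hS.1 h10 h01

theorem taylor_one_fst_mem_of_half (hS : IsSubM' (1/2) b c S) (hv : v ∈ S) :
    ((taylor 1 v.1, 0) : V) ∈ S := by
  have h := S.smul_mem 2 (hS.smul_taylor_mem hv 1)
  norm_num [smul_smul] at h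
  exact h

theorem one_zero_mem_of_half (hS : IsSubM' (1/2) b c S) (hbot : S ≠ ⊥) : ((1, 0) : V) ∈ S := by
  obtain ⟨v, hv, hv0⟩ := Submodule.exists_mem_ne_zero_of_ne_bot hbot
  have hT : ∀ p ∈ S.comap (LinearMap.inl ℂ P P), taylor 1 p ∈ S.comap (LinearMap.inl ℂ P P) :=
    fun p hp => taylor_one_fst_mem_of_half hS hp
  by_cases hv1 : v.1 = 0
  · have hv2 : v.2 ≠ 0 := fun h => hv0 (Prod.ext hv1 h)
    exact one_mem_of_taylor_one_mem _ hT (taylor_one_fst_mem_of_half hS (hS.G_zero_mem hv))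
      ((taylor_eq_zero 1 v.2).not.2 hv2)
  · exact one_mem_of_taylor_one_mem _ hT (taylor_one_fst_mem_of_half hS hv)
      ((taylor_eq_zero 1 v.1).not.2 hv1)

theorem NM'_le_of_half (hS : IsSubM' (1/2) b c S) (hbot : S ≠ ⊥) : NM' b ≤ S := by
  have h10 := one_zero_mem_of_half hS hbot
  intro w hw
  obtain ⟨e, he⟩ := (mem_NM' b w).1 hw
  have h := S.add_mem (hS.smul_mem w.1 h10) (hS.smul_mem e (hS.G_zero_mem h10))
  convert h using 1
  simpa [Prod.ext_iff] using he.trans (mul_comm _ _)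

end IsSubM'

theorem stmt11_general (a b c : ℂ) :
    ((∀ S : Submodule ℂ V, IsSubM' a b c S → S = ⊥ ∨ S = ⊤) ↔ a ≠ 1/2)
    ∧ (a = 1/2 →
        IsSubM' (1/2) b c (NM' b) ∧ NM' b ≠ ⊥ ∧ NM' b ≠ ⊤ ∧
        ∀ S : Submodule ℂ V, IsSubM' (1/2) b c S → S ≠ ⊥ → S ≠ ⊤ → S = NM' b) := by
  have hN := isCoatom_NM' b
  refine ⟨⟨fun h ha => ?_, fun ha S hS => or_iff_not_imp_left.2 (hS.eq_top_of_ne_half ha)⟩, ?_⟩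
  · subst ha
    exact (h _ (isSubM'_NM' b c)).elim (NM'_ne_bot b) hN.1
  · rintro rfl
    exact ⟨isSubM'_NM' b c, NM'_ne_bot b, hN.1, fun S hS hbot htop =>
      (hN.le_iff_eq htop).1 (hS.NM'_le_of_half hbot)⟩

/-- `M'_{a,b,c}` is irreducible iff `a ≠ 1/2`; and when `a = 1/2`,
`ℂ[∂]x ⊕ ℂ[∂](∂+b)y` is the unique nontrivial proper submodule of `M'_{1/2,b,c}`. -/
theorem stmt11 (a b c : ℂ) (hc : c ≠ 0) :
    ((∀ S : Submodule ℂ V, IsSubM' a b c S → S = ⊥ ∨ S = ⊤) ↔ a ≠ 1/2)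
    ∧ (a = 1/2 →
        IsSubM' (1/2) b c (NM' b) ∧ NM' b ≠ ⊥ ∧ NM' b ≠ ⊤ ∧
        ∀ S : Submodule ℂ V, IsSubM' (1/2) b c S → S ≠ ⊥ → S ≠ ⊤ → S = NM' b) :=
  stmt11_general a b c
end
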